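/- arXiv:1209.4559 — 2 statements merged into one kernel-verified Lean document; each statement's English description precedes it below -/
import Mathlib

section
/- Suppose Γ is a subgroup of the Hahn group Σ_{φ∈Φ} ℝ, that k contains all the real exponents appearing in elements of Γ, and that the ordered set Φ carries a right shift σ: Φ → Φ. Define a map d on the monomials t_φ by d(t_φ)/t_φ := t^{θ_φ} = Π_{n≥1} t_{σ^n(φ)}^{θ_{φ,n}}, where θ_φ = Σ_{n≥1} θ_{φ,n} 1_{σ^n(φ)} ∈ Γ with θ_{φ,n} ∈ ℝ and θ_{φ,1} < 0. Then d extends to a series derivation on k((Γ)) via the strong Leibniz rule and strong linearity; in particular, for every series a = Σ_α a_α t^α, the family (a_α α_φ t^{α+θ_φ})_{α,φ} is summable. -/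
/- Common setting: a generalized series field `k((Γ))`, where the totally ordered abelian
group `Γ` is regarded, via Hahn's embedding theorem, as a subgroup of the Hahn group
`Σ_{φ ∈ Φ} ℝ = HahnSeries Φ ℝ`, and the coefficient field `k` contains the real exponents
(via a ring homomorphism `ι : ℝ →+* k`). -/

open HahnSeries

noncomputable section

/-- Archimedean equivalence on an ordered abelian group. -/
def ArchEquiv {Γ : Type*} [AddCommGroup Γ] [LinearOrder Γ] [IsOrderedAddMonoid Γ] (x y : Γ) : Prop :=
  ∃ n : ℕ, |x| ≤ n • |y| ∧ |y| ≤ n • |x|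

/-- Lexicographic positivity of a (generalized) Hahn series: the leading coefficient is
positive. -/
def LexPos {Φ : Type*} [LinearOrder Φ] {R : Type*} [Zero R] [PartialOrder R]
    (x : HahnSeries Φ R) : Prop :=
  ∃ φ, 0 < x.coeff φ ∧ ∀ ψ, ψ < φ → x.coeff ψ = 0

/-- Lexicographic order relation. -/
def LexLe {Φ : Type*} [LinearOrder Φ] {R : Type*} [AddCommGroup R] [PartialOrder R]
    (x y : HahnSeries Φ R) : Prop :=
  x = y ∨ LexPos (y - x)

/-- The data of Hahn's embedding theorem: `Γ` is (identified with) a subgroup of the Hahn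
group `Σ_{φ ∈ Φ} ℝ` ordered lexicographically, containing the characteristic functions
`1_φ = single φ 1`.  The natural valuation of `γ ∈ Γ` is `(e γ).orderTop`. -/
structure HahnEmbeddingData (Φ : Type*) [LinearOrder Φ]
    (Γ : Type*) [AddCommGroup Γ] [LinearOrder Γ] [IsOrderedAddMonoid Γ] where
  e : Γ →+ HahnSeries Φ ℝ
  inj : Function.Injective e
  ord : ∀ γ : Γ, 0 < γ ↔ LexPos (e γ)
  b : Φ → Γ
  hb : ∀ φ, e (b φ) = HahnSeries.single φ 1

variable {Φ : Type*} [LinearOrder Φ] {Γ : Type*} [AddCommGroup Γ] [LinearOrder Γ] [IsOrderedAddMonoid Γ]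
  {k : Type*} [Field k]

/-- The fundamental monomial `t_φ = t^{1_φ}` in `k((Γ))`. -/
def tmon (H : HahnEmbeddingData Φ Γ) (k : Type*) [Field k] (φ : Φ) : HahnSeries Γ k :=
  HahnSeries.single (H.b φ) 1

/-- The logarithmic derivative `d(t_φ)/t_φ` of the fundamental monomial `t_φ`. -/
def logDer (H : HahnEmbeddingData Φ Γ) (D : HahnSeries Γ k → HahnSeries Γ k) (φ : Φ) :
    HahnSeries Γ k :=
  D (tmon H k φ) * (tmon H k φ)⁻¹

/-- A series derivation on `k((Γ))`: a derivation which is strongly linear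
(`d(Σ a_α t^α) = Σ a_α d(t^α)`, the family being summable) and satisfies the strong
Leibniz rule (`d(t^α) = t^α Σ_φ α_φ d(t_φ)/t_φ`, the family being summable). -/
structure IsSeriesDerivation (H : HahnEmbeddingData Φ Γ) (ι : ℝ →+* k)
    (D : HahnSeries Γ k → HahnSeries Γ k) : Prop where
  map_add : ∀ x y, D (x + y) = D x + D y
  leibniz : ∀ x y, D (x * y) = D x * y + x * D y
  strong_linear : ∀ x : HahnSeries Γ k, ∃ s : SummableFamily Γ k Γ,
    (∀ γ, s γ = x.coeff γ • D (HahnSeries.single γ 1)) ∧ D x = s.hsum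
  strong_leibniz : ∀ γ : Γ, ∃ s : SummableFamily Γ k Φ,
    (∀ φ, s φ = ι ((H.e γ).coeff φ) • (HahnSeries.single γ 1 * logDer H D φ)) ∧
    D (HahnSeries.single γ 1) = s.hsum

/-- (HD1): the valuation ring is `ker d + m_v`. -/
def HDone (D : HahnSeries Γ k → HahnSeries Γ k) : Prop :=
  {x : HahnSeries Γ k | 0 ≤ x.orderTop} =
    {x : HahnSeries Γ k | ∃ c m, D c = 0 ∧ 0 < HahnSeries.orderTop m ∧ x = c + m}

/-- (HD2): l'Hospital's rule. -/
def HDtwo (D : HahnSeries Γ k → HahnSeries Γ k) : Prop :=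
  ∀ a b : HahnSeries Γ k, a ≠ 0 → b ≠ 0 → a.order ≠ 0 → b.order ≠ 0 →
    (a.orderTop ≤ b.orderTop ↔ (D a).orderTop ≤ (D b).orderTop)

/-- (HD3): compatibility of the logarithmic derivative with the valuation. -/
def HDthree (D : HahnSeries Γ k → HahnSeries Γ k) : Prop :=
  ∀ a b : HahnSeries Γ k, a ≠ 0 → b ≠ 0 → |b.order| < |a.order| → 0 < |b.order| →
    (D a * a⁻¹).orderTop ≤ (D b * b⁻¹).orderTop ∧
      ((D a * a⁻¹).orderTop = (D b * b⁻¹).orderTop ↔ ArchEquiv a.order b.order)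

/-- A series derivation of Hardy type on `k((Γ))`. -/
def IsHardySeriesDerivation (H : HahnEmbeddingData Φ Γ) (ι : ℝ →+* k)
    (D : HahnSeries Γ k → HahnSeries Γ k) : Prop :=
  IsSeriesDerivation H ι D ∧ HDone D ∧ HDtwo D ∧ HDthree D

end

/-- A right shift on an ordered set: an order preserving map `σ` with `σ φ > φ`. -/
def IsRightShift {Φ : Type*} [Preorder Φ] (σ : Φ → Φ) : Prop :=
  StrictMono σ ∧ ∀ φ, φ < σ φ


/-!
Set `d a := Σ_{α,φ} a_α α_φ t^{α+θ_φ}`; everything hinges on this family being summable. The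
natural valuation of `θ_φ` is `σ φ > φ`, and `θ` is strictly increasing: for `ψ < φ` the leading
term of `θ_φ - θ_ψ` is `-θ_{ψ,1} 1_{σ ψ} > 0`. Given exponents `α_n + θ_{φ_n}` that do not
increase, with `α_n` increasing, the `φ_n` must decrease and
`0 ≤ α_{n+1} - α_n ≤ θ_{φ_n} - θ_{φ_{n+1}}`, an element of valuation `> φ_{n+1}`. Hence the
coefficient of `α_n` at `φ_m` does not depend on `n ≤ m`, so all `φ_m` lie in the well-ordered
support of `α_0`, which is absurd.

Summing the family by columns gives `d a = Σ_φ δ_φ(a) t^{θ_φ}`, where `δ_φ` multiplies the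
coefficient of `t^α` by `α_φ`; each `δ_φ` is a derivation, whence the Leibniz rule. Summing by
rows gives strong linearity.
-/

namespace HahnSeries

theorem smul_single {Γ R : Type*} [PartialOrder Γ] [Semiring R] (c : R) (a : Γ) (r : R) :
    c • single a r = single a (c * r) := by
  ext g
  by_cases h : g = a <;> simp [h, coeff_single_of_ne]

namespace SummableFamily

noncomputable section

section AddCommMonoid

variable {Γ R α β : Type*} [PartialOrder Γ] [AddCommMonoid R]

def slice (s : SummableFamily Γ R (α × β)) (a : α) : SummableFamily Γ R β where
  toFun b := s (a, b)
  isPWO_iUnion_support' := s.isPWO_iUnion_support.mono <|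
    Set.iUnion_subset fun b => Set.subset_iUnion (fun p => (s p).support) (a, b)
  finite_co_support' g := (s.finite_co_support g).preimage (Prod.mk_right_injective a).injOn

@[simp]
theorem slice_apply (s : SummableFamily Γ R (α × β)) (a : α) (b : β) : s.slice a b = s (a, b) :=
  rfl

theorem exists_coeff_ne_zero_of_coeff_hsum_ne_zero {s : SummableFamily Γ R α} {g : Γ}
    (h : s.hsum.coeff g ≠ 0) : ∃ a, (s a).coeff g ≠ 0 := by
  by_contra! h'
  exact h (by rw [coeff_hsum, finsum_congr h', finsum_zero])

def sumSlices (s : SummableFamily Γ R (α × β)) : SummableFamily Γ R α where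
  toFun a := (s.slice a).hsum
  isPWO_iUnion_support' := s.isPWO_iUnion_support.mono <| Set.iUnion_subset fun a =>
    support_hsum_subset.trans <|
      Set.iUnion_subset fun b => Set.subset_iUnion (fun p => (s p).support) (a, b)
  finite_co_support' g := ((s.finite_co_support g).image Prod.fst).subset fun a ha => by
    obtain ⟨b, hb⟩ := exists_coeff_ne_zero_of_coeff_hsum_ne_zero ha
    exact ⟨(a, b), hb, rfl⟩

@[simp]
theorem sumSlices_apply (s : SummableFamily Γ R (α × β)) (a : α) :
    s.sumSlices a = (s.slice a).hsum :=
  rfl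

theorem hsum_sumSlices (s : SummableFamily Γ R (α × β)) : s.sumSlices.hsum = s.hsum := by
  ext g
  exact (finsum_curry _ (s.finite_co_support g)).symm

theorem hsum_eq_apply_of_forall_ne (s : SummableFamily Γ R α) (a : α)
    (h : ∀ b, b ≠ a → s b = 0) : s.hsum = s a := by
  ext g
  exact finsum_eq_single _ a fun b hb => by simp [h b hb]

end AddCommMonoid

theorem hsum_const_smul {Γ R α : Type*} [PartialOrder Γ] [Semiring R] (c : R)
    (s : SummableFamily Γ R α) : (c • s).hsum = c • s.hsum := by
  ext g
  simp only [coeff_hsum, coe_smul', Pi.smul_apply, HahnSeries.coeff_smul, smul_eq_mul]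
  exact (mul_finsum' _ c (s.finite_co_support g)).symm

section LinearOrder

variable {Γ R β : Type*} [LinearOrder Γ] [AddCommMonoid R]

theorem isPWO_image_of_forall_not_antitone {f : β → Γ} {c : β → R}
    (h : ∀ p : ℕ → β, Function.Injective p → (∀ n, c (p n) ≠ 0) → ¬ Antitone (f ∘ p)) :
    (f '' Function.support c).IsPWO := by
  refine (Set.isWF_iff_no_descending_seq.mpr fun g hg hgmem => ?_).isPWO
  choose p hp hfp using hgmem
  have hfp' : f ∘ p = g := funext hfp
  exact h p (fun m n hmn => hg.injective (by rw [← hfp', Function.comp_apply, hmn]; rfl)) hp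
    (hfp' ▸ hg.antitone)

theorem finite_fiber_of_forall_not_antitone {f : β → Γ} {c : β → R}
    (h : ∀ p : ℕ → β, Function.Injective p → (∀ n, c (p n) ≠ 0) → ¬ Antitone (f ∘ p)) (g : Γ) :
    {b | c b ≠ 0 ∧ f b = g}.Finite := by
  by_contra hinf
  let p := Set.Infinite.natEmbedding _ hinf
  refine h (fun n => (p n : β)) (Subtype.val_injective.comp p.injective) (fun n => (p n).2.1) ?_
  intro m n _
  simp only [Function.comp_apply, (p m).2.2, (p n).2.2, le_refl]

def ofSingles (f : β → Γ) (c : β → R)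
    (h : ∀ p : ℕ → β, Function.Injective p → (∀ n, c (p n) ≠ 0) → ¬ Antitone (f ∘ p)) :
    SummableFamily Γ R β where
  toFun b := HahnSeries.single (f b) (c b)
  isPWO_iUnion_support' := (isPWO_image_of_forall_not_antitone h).mono <|
    Set.iUnion_subset fun b g hg => by
      have hcb : c b ≠ 0 := fun hcb => by simp [hcb] at hg
      exact ⟨b, hcb, (support_single_subset hg).symm⟩
  finite_co_support' g := (finite_fiber_of_forall_not_antitone h g).subset fun b hb => by
    by_cases hg : g = f b
    · subst hg
      exact ⟨by simpa using hb, rfl⟩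
    · simp [HahnSeries.coeff_single_of_ne hg] at hb

@[simp]
theorem ofSingles_apply (f : β → Γ) (c : β → R) (h) (b : β) :
    ofSingles f c h b = HahnSeries.single (f b) (c b) :=
  rfl

end LinearOrder

theorem hsum_eq_mul_single {Γ R : Type*} [AddCommGroup Γ] [PartialOrder Γ] [IsOrderedAddMonoid Γ]
    [Semiring R] (x : HahnSeries Γ R) (b : Γ) {s : SummableFamily Γ R Γ}
    (hs : ∀ γ, s γ = HahnSeries.single (γ + b) (x.coeff γ)) :
    s.hsum = x * HahnSeries.single b 1 := by
  ext g
  rw [coeff_hsum, finsum_eq_single _ (g - b), hs, sub_add_cancel, coeff_single_same,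
    ← sub_add_cancel g b, coeff_mul_single_add, mul_one, add_sub_cancel_right]
  intro γ hγ
  rw [hs, coeff_single_of_ne]
  rintro rfl
  exact hγ (add_sub_cancel_right γ b).symm

end

end SummableFamily

section EulerDeriv

variable {Γ R : Type*} [AddCommMonoid Γ] [PartialOrder Γ] [CommSemiring R] (χ : Γ →+ R)

def eulerDeriv (x : HahnSeries Γ R) : HahnSeries Γ R where
  coeff γ := x.coeff γ * χ γ
  isPWO_support' := x.isPWO_support.mono fun _ hγ => left_ne_zero_of_mul hγ

@[simp]
theorem coeff_eulerDeriv (x : HahnSeries Γ R) (γ : Γ) :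
    (eulerDeriv χ x).coeff γ = x.coeff γ * χ γ :=
  rfl

theorem eulerDeriv_single (a : Γ) (r : R) : eulerDeriv χ (single a r) = single a (r * χ a) := by
  ext γ
  by_cases h : γ = a <;> simp [h, coeff_single_of_ne]

theorem support_eulerDeriv_subset (x : HahnSeries Γ R) : (eulerDeriv χ x).support ⊆ x.support :=
  fun _ hγ => left_ne_zero_of_mul hγ

theorem eulerDeriv_mul [IsOrderedCancelAddMonoid Γ] (x y : HahnSeries Γ R) :
    eulerDeriv χ (x * y) = eulerDeriv χ x * y + x * eulerDeriv χ y := by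
  ext γ
  rw [coeff_add, coeff_mul_left' x.isPWO_support (support_eulerDeriv_subset χ x),
    coeff_mul_right' y.isPWO_support (support_eulerDeriv_subset χ y), coeff_eulerDeriv,
    coeff_mul, Finset.sum_mul, ← Finset.sum_add_distrib]
  refine Finset.sum_congr rfl fun ij hij => ?_
  rw [← (Finset.mem_antidiagonal.mp hij).2.2, map_add, coeff_eulerDeriv, coeff_eulerDeriv]
  ring

end EulerDeriv

end HahnSeries

theorem lexPos_iff_pos_toLex {Φ R : Type*} [LinearOrder Φ] [Zero R] [PartialOrder R]
    {x : HahnSeries Φ R} : LexPos x ↔ 0 < toLex x := by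
  rw [HahnSeries.lt_iff]
  exact exists_congr fun φ => by simp [and_comm, eq_comm]

namespace IsRightShift

variable {Φ : Type*} [LinearOrder Φ] {σ : Φ → Φ}

theorem le_iterate (hσ : IsRightShift σ) (φ : Φ) {n : ℕ} (hn : 1 ≤ n) : σ φ ≤ σ^[n] φ := by
  obtain ⟨m, rfl⟩ := Nat.exists_eq_add_of_le' hn
  rw [Function.iterate_succ_apply]
  exact Function.id_le_iterate_of_id_le (fun x => (hσ.2 x).le) m (σ φ)

theorem le_orderTop {R : Type*} [Zero R] (hσ : IsRightShift σ) {x : HahnSeries Φ R} {φ : Φ}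
    (hx : ∀ ψ ∈ x.support, ∃ n, 1 ≤ n ∧ ψ = σ^[n] φ) : (σ φ : WithTop Φ) ≤ x.orderTop := by
  refine HahnSeries.le_orderTop_iff_forall.mpr fun ψ hψ => ?_
  by_contra hne
  obtain ⟨n, hn, rfl⟩ := hx ψ hne
  exact (WithTop.coe_lt_coe.mp hψ).not_ge (hσ.le_iterate φ hn)

end IsRightShift

namespace HahnEmbeddingData

variable {Φ Γ : Type*} [LinearOrder Φ] [AddCommGroup Γ] [LinearOrder Γ] [IsOrderedAddMonoid Γ]
  (H : HahnEmbeddingData Φ Γ)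

theorem strictMono_toLex : StrictMono fun γ => toLex (H.e γ) := by
  intro γ δ h
  have := (H.ord (δ - γ)).mp (sub_pos.mpr h)
  rwa [lexPos_iff_pos_toLex, map_sub, toLex_sub, sub_pos] at this

theorem orderTop_le_orderTop_of_le {x y : Γ} (hx : 0 ≤ x) (hxy : x ≤ y) :
    (H.e y).orderTop ≤ (H.e x).orderTop := by
  have habs : |toLex (H.e x)| ≤ |toLex (H.e y)| := by
    have h0 := H.strictMono_toLex.monotone hx
    have h1 := H.strictMono_toLex.monotone hxy
    simp only [map_zero, toLex_zero] at h0
    rw [abs_of_nonneg h0, abs_of_nonneg (h0.trans h1)]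
    exact h1
  exact not_lt.mp fun h => habs.not_gt (HahnSeries.abs_lt_abs_of_orderTop_ofLex h)

theorem strictMono_of_isRightShift {σ : Φ → Φ} (hσ : IsRightShift σ) {θ : Φ → Γ}
    (hv : ∀ φ, (σ φ : WithTop Φ) ≤ (H.e (θ φ)).orderTop)
    (hneg : ∀ φ, (H.e (θ φ)).coeff (σ φ) < 0) : StrictMono θ := by
  have hzero : ∀ {φ ψ}, ψ < σ φ → (H.e (θ φ)).coeff ψ = 0 := fun hψ =>
    HahnSeries.coeff_eq_zero_of_lt_orderTop ((WithTop.coe_lt_coe.mpr hψ).trans_le (hv _))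
  intro ψ φ hψφ
  have hσψφ := hσ.1 hψφ
  refine H.strictMono_toLex.lt_iff_lt.mp ((HahnSeries.lt_iff _ _).mpr ⟨σ ψ, fun j hj => ?_, ?_⟩)
  · simp [hzero hj, hzero (hj.trans hσψφ)]
  · simpa [hzero hσψφ] using hneg ψ

theorem not_strictAnti_of_sub_le {θ : Φ → Γ} (hv : ∀ φ : Φ, ↑φ < (H.e (θ φ)).orderTop)
    {α : ℕ → Γ} {φ : ℕ → Φ} (hα : Monotone α) (hne : ∀ n, (H.e (α n)).coeff (φ n) ≠ 0)
    (hle : ∀ n, α (n + 1) - α n ≤ θ (φ n) - θ (φ (n + 1))) : ¬ StrictAnti φ := by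
  intro hφ
  have hstep : ∀ n m, n < m → (H.e (α (n + 1) - α n)).coeff (φ m) = 0 := by
    intro n m hnm
    refine HahnSeries.coeff_eq_zero_of_lt_orderTop ?_
    calc (φ m : WithTop Φ) ≤ φ (n + 1) := WithTop.coe_le_coe.mpr (hφ.antitone hnm)
      _ < min (H.e (θ (φ n))).orderTop (H.e (θ (φ (n + 1)))).orderTop :=
        lt_min ((WithTop.coe_lt_coe.mpr (hφ n.lt_succ_self)).trans (hv _)) (hv _)
      _ ≤ (H.e (θ (φ n) - θ (φ (n + 1)))).orderTop := by
        rw [map_sub]; exact HahnSeries.min_orderTop_le_orderTop_sub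
      _ ≤ (H.e (α (n + 1) - α n)).orderTop :=
        H.orderTop_le_orderTop_of_le (sub_nonneg.mpr (hα n.le_succ)) (hle n)
  have hconst : ∀ m n, n ≤ m → (H.e (α n)).coeff (φ m) = (H.e (α 0)).coeff (φ m) := by
    intro m n
    induction n with
    | zero => exact fun _ => rfl
    | succ n ih =>
      intro hnm
      rw [← ih (by omega), ← sub_add_cancel (α (n + 1)) (α n), map_add, HahnSeries.coeff_add,
        hstep n m (by omega), zero_add]
  exact Set.isWF_iff_no_descending_seq.mp (H.e (α 0)).isWF_support φ hφ
    fun m => by simpa [hconst m m le_rfl] using hne m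

theorem not_antitone_add_of_injective {θ : Φ → Γ} (hθ : StrictMono θ)
    (hv : ∀ φ : Φ, ↑φ < (H.e (θ φ)).orderTop)
    {s : Set Γ} (hs : s.IsPWO) {p : ℕ → Γ × Φ} (hp : Function.Injective p)
    (hps : ∀ n, (p n).1 ∈ s) (hne : ∀ n, (H.e (p n).1).coeff (p n).2 ≠ 0) :
    ¬ Antitone fun n => (p n).1 + θ (p n).2 := by
  intro hanti
  obtain ⟨g, hg⟩ := hs.exists_monotone_subseq (f := fun n => (p n).1) hps
  set α := fun n => (p (g n)).1
  set φ := fun n => (p (g n)).2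
  have hα : Monotone α := hg
  have hsum : ∀ n, α (n + 1) + θ (φ (n + 1)) ≤ α n + θ (φ n) :=
    fun n => hanti (g.monotone n.le_succ)
  have hθφ : ∀ n, θ (φ (n + 1)) < θ (φ n) := by
    intro n
    refine lt_of_le_of_ne
      (le_of_add_le_add_left ((hsum n).trans (add_le_add_left (hα n.le_succ) _))) fun heq => ?_
    have hαeq : α (n + 1) = α n :=
      le_antisymm (le_of_add_le_add_right (heq ▸ hsum n)) (hα n.le_succ)
    exact (g.strictMono n.lt_succ_self).ne' (hp (Prod.ext hαeq (hθ.injective heq)))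
  refine H.not_strictAnti_of_sub_le hv hα (fun n => hne (g n))
    (fun n => sub_le_sub_iff.mpr (add_comm (θ (φ n)) (α n) ▸ hsum n))
    (strictAnti_nat_of_succ_lt fun n => hθ.lt_iff_lt.mp (hθφ n))

open HahnSeries SummableFamily

noncomputable section

variable {Φ Γ k : Type*} [LinearOrder Φ] [AddCommGroup Γ] [LinearOrder Γ] [IsOrderedAddMonoid Γ]
  [Field k] (H : HahnEmbeddingData Φ Γ) (ι : ℝ →+* k) {θ : Φ → Γ}
  (hθ : StrictMono θ) (hv : ∀ φ : Φ, ↑φ < (H.e (θ φ)).orderTop)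

def exponentCoord (φ : Φ) : Γ →+ k :=
  ι.toAddMonoidHom.comp ((HahnSeries.coeff.addMonoidHom φ).comp H.e)

@[simp]
theorem exponentCoord_apply (φ : Φ) (γ : Γ) : H.exponentCoord ι φ γ = ι ((H.e γ).coeff φ) :=
  rfl

def derivFamily (a : HahnSeries Γ k) : SummableFamily Γ k (Γ × Φ) :=
  ofSingles (fun p => p.1 + θ p.2) (fun p => a.coeff p.1 * ι ((H.e p.1).coeff p.2))
    fun _ hp hne => H.not_antitone_add_of_injective hθ hv a.isPWO_support hp
      (fun n => left_ne_zero_of_mul (hne n)) fun n h => hne n (by simp [h])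

def deriv (a : HahnSeries Γ k) : HahnSeries Γ k :=
  (H.derivFamily ι hθ hv a).hsum

def columnFamily (a : HahnSeries Γ k) : SummableFamily Γ k Φ :=
  ((H.derivFamily ι hθ hv a).Equiv (Equiv.prodComm Γ Φ)).sumSlices

theorem columnFamily_apply (a : HahnSeries Γ k) (φ : Φ) :
    H.columnFamily ι hθ hv a φ = eulerDeriv (H.exponentCoord ι φ) a * single (θ φ) 1 :=
  hsum_eq_mul_single _ _ fun _ => rfl

theorem hsum_columnFamily (a : HahnSeries Γ k) :
    (H.columnFamily ι hθ hv a).hsum = H.deriv ι hθ hv a := by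
  rw [columnFamily, hsum_sumSlices, hsum_equiv, deriv]

theorem deriv_add (x y : HahnSeries Γ k) :
    H.deriv ι hθ hv (x + y) = H.deriv ι hθ hv x + H.deriv ι hθ hv y := by
  rw [deriv, deriv, deriv, ← hsum_add]
  congr 1
  ext p : 1
  simp [derivFamily, add_mul]

theorem deriv_mul (x y : HahnSeries Γ k) :
    H.deriv ι hθ hv (x * y) = H.deriv ι hθ hv x * y + x * H.deriv ι hθ hv y := by
  have hcol : H.columnFamily ι hθ hv (x * y) =
      y • H.columnFamily ι hθ hv x + x • H.columnFamily ι hθ hv y := by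
    ext φ : 1
    simp only [SummableFamily.add_apply, SummableFamily.smul_apply, of_symm_smul_of_eq_mul,
      columnFamily_apply, eulerDeriv_mul]
    ring
  rw [← hsum_columnFamily, hcol, hsum_add, hsum_smul, hsum_smul, hsum_columnFamily,
    hsum_columnFamily, mul_comm y]

theorem deriv_single_one (γ : Γ) :
    H.deriv ι hθ hv (single γ 1) = ((H.derivFamily ι hθ hv (single γ 1)).slice γ).hsum := by
  rw [deriv, ← hsum_sumSlices, hsum_eq_apply_of_forall_ne _ γ fun γ' hγ' => ?_, sumSlices_apply]
  have : (H.derivFamily ι hθ hv (single γ 1)).slice γ' = 0 := by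
    ext φ : 1
    simp [derivFamily, coeff_single_of_ne hγ']
  rw [sumSlices_apply, this, hsum_zero]

theorem slice_derivFamily (x : HahnSeries Γ k) (γ : Γ) :
    (H.derivFamily ι hθ hv x).slice γ =
      x.coeff γ • (H.derivFamily ι hθ hv (single γ 1)).slice γ := by
  ext φ : 1
  simp [derivFamily, smul_single]

theorem deriv_tmon (φ : Φ) :
    H.deriv ι hθ hv (tmon H k φ) = tmon H k φ * single (θ φ) 1 := by
  rw [← hsum_columnFamily, hsum_eq_apply_of_forall_ne _ φ fun ψ hψ => ?_]
  · simp [columnFamily_apply, tmon, eulerDeriv_single, H.hb]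
  · simp [columnFamily_apply, tmon, eulerDeriv_single, H.hb, coeff_single_of_ne hψ]

theorem logDer_deriv (φ : Φ) : logDer H (H.deriv ι hθ hv) φ = single (θ φ) 1 := by
  rw [logDer, deriv_tmon, mul_comm (tmon H k φ), mul_assoc,
    mul_inv_cancel₀ (single_ne_zero one_ne_zero), mul_one]

theorem isSeriesDerivation_deriv : IsSeriesDerivation H ι (H.deriv ι hθ hv) where
  map_add := H.deriv_add ι hθ hv
  leibniz := H.deriv_mul ι hθ hv
  strong_linear x := ⟨(H.derivFamily ι hθ hv x).sumSlices, fun γ => by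
      rw [sumSlices_apply, slice_derivFamily, hsum_const_smul, deriv_single_one],
    (hsum_sumSlices _).symm⟩
  strong_leibniz γ := ⟨H.columnFamily ι hθ hv (single γ 1), fun φ => by
      simp [columnFamily_apply, logDer_deriv, eulerDeriv_single, single_mul_single, smul_single],
    (hsum_columnFamily ..).symm⟩

end

end HahnEmbeddingData

/-- if `Φ` carries a right shift `σ` and one defines
`d(t_φ)/t_φ := t^{θ_φ} = Π_{n ≥ 1} t_{σ^n(φ)}^{θ_{φ,n}}` where
`θ_φ = Σ_{n ≥ 1} θ_{φ,n} 1_{σ^n(φ)} ∈ Γ` with `θ_{φ,1} < 0`, then this extends to a series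
derivation on `k((Γ))` via the strong Leibniz rule and strong linearity; in particular for
every series `a` the family `(a_α α_φ t^{α + θ_φ})_{(α,φ)}` is summable. -/
theorem right_shift_series_derivation {Φ : Type*} [LinearOrder Φ]
    {Γ : Type*} [AddCommGroup Γ] [LinearOrder Γ] [IsOrderedAddMonoid Γ] {k : Type*} [Field k]
    (H : HahnEmbeddingData Φ Γ) (ι : ℝ →+* k)
    (σ : Φ → Φ) (hσ : IsRightShift σ)
    (θ : Φ → Γ)
    (hsupp : ∀ φ ψ, ψ ∈ (H.e (θ φ)).support → ∃ n : ℕ, 1 ≤ n ∧ ψ = σ^[n] φ)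
    (hneg : ∀ φ, (H.e (θ φ)).coeff (σ φ) < 0) :
    ∃ D : HahnSeries Γ k → HahnSeries Γ k,
      IsSeriesDerivation H ι D ∧
      (∀ φ, D (tmon H k φ) = tmon H k φ * HahnSeries.single (θ φ) 1) ∧
      (∀ a : HahnSeries Γ k, ∃ s : HahnSeries.SummableFamily Γ k (Γ × Φ),
        (∀ p : Γ × Φ,
          s p = (a.coeff p.1 * ι ((H.e p.1).coeff p.2)) • HahnSeries.single (p.1 + θ p.2) 1) ∧
        D a = s.hsum) := by
  have hσθ : ∀ φ, (σ φ : WithTop Φ) ≤ (H.e (θ φ)).orderTop := fun φ => hσ.le_orderTop (hsupp φ)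
  have hθ : StrictMono θ := H.strictMono_of_isRightShift hσ hσθ hneg
  have hv : ∀ φ : Φ, ↑φ < (H.e (θ φ)).orderTop :=
    fun φ => (WithTop.coe_lt_coe.mpr (hσ.2 φ)).trans_le (hσθ φ)
  refine ⟨H.deriv ι hθ hv, H.isSeriesDerivation_deriv ι hθ hv, H.deriv_tmon ι hθ hv,
    fun a => ⟨H.derivFamily ι hθ hv a, fun p => ?_, rfl⟩⟩
  rw [HahnSeries.smul_single, mul_one]
  rfl
end

section
/- Let k be an ordered field, order k((Γ)) lexicographically (so that its valuation ring k[[Γ_{≥0}]] is the convex hull of k), and let d be a series derivation of Hardy type on k((Γ)). Then k((Γ)) is an H-field if and only if for every φ ∈ Φ one has d(t_φ)/t_φ < 0, i.e. the leading coefficient of d(t_φ)/t_φ is negative. -/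
/- Common setting: a generalized series field `k((Γ))`, where the totally ordered abelian
group `Γ` is regarded, via Hahn's embedding theorem, as a subgroup of the Hahn group
`Σ_{φ ∈ Φ} ℝ = HahnSeries Φ ℝ`, and the coefficient field `k` contains the real exponents
(via a ring homomorphism `ι : ℝ →+* k`). -/

open HahnSeries

/-!
For `f > 0` with `v(f) = γ < 0`, the sign of `d(f)` is the sign of `d(t^γ)`, because by (HD2)
the terms of `f` of higher valuation contribute to `d(f)` only at higher valuation. By the strong
Leibniz rule `d(t^γ) = t^γ Σ_φ γ_φ d(t_φ)/t_φ`, and by (HD3) the valuations of the `d(t_φ)/t_φ`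
strictly increase with `φ`, because the `1_φ` are pairwise Archimedean inequivalent. So the sum
is led by the term of the leading index `φ₀` of `γ`, whose coefficient `γ_{φ₀}` is negative:
`d(t^γ) > 0` exactly when `d(t_{φ₀})/t_{φ₀} < 0`. Conversely, (HF2) for `t_φ⁻¹ > 0` gives the
sign of `d(t_φ)/t_φ = -t_φ d(t_φ⁻¹)`.
-/

section LeadingCoeff

variable {Φ : Type*} [LinearOrder Φ] {R : Type*}

theorem HahnSeries.coeff_eq_leadingCoeff_of_orderTop_eq [Zero R] {x : HahnSeries Φ R} {g : Φ}
    (h : x.orderTop = g) : x.coeff g = x.leadingCoeff := by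
  have hx : x ≠ 0 := orderTop_ne_top.1 (h ▸ WithTop.coe_ne_top)
  rw [leadingCoeff_of_ne_zero hx, (WithTop.untop_eq_iff _).2 h]

theorem lexPos_iff_leadingCoeff_pos [Zero R] [PartialOrder R] {x : HahnSeries Φ R} :
    LexPos x ↔ 0 < x.leadingCoeff := by
  constructor
  · rintro ⟨φ, hpos, hbelow⟩
    have htop : x.orderTop = φ := orderTop_eq_of_le ((mem_support _ _).2 hpos.ne')
      fun ψ hψ => not_lt.1 fun hlt => (mem_support _ _).1 hψ (hbelow ψ hlt)
    rwa [← coeff_eq_leadingCoeff_of_orderTop_eq htop]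
  · intro hpos
    obtain ⟨φ, htop⟩ := WithTop.ne_top_iff_exists.1
      (orderTop_ne_top.2 (leadingCoeff_ne_zero.1 hpos.ne'))
    refine ⟨φ, by rwa [coeff_eq_leadingCoeff_of_orderTop_eq htop.symm], fun ψ hψ => ?_⟩
    exact coeff_eq_zero_of_lt_orderTop (htop ▸ WithTop.coe_lt_coe.2 hψ)

theorem LexPos.ne_zero [Zero R] [PartialOrder R] {x : HahnSeries Φ R} (h : LexPos x) : x ≠ 0 :=
  leadingCoeff_ne_zero.1 (lexPos_iff_leadingCoeff_pos.1 h).ne'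

theorem lexPos_neg_iff_leadingCoeff_neg [AddCommGroup R] [LinearOrder R] [IsOrderedAddMonoid R]
    {x : HahnSeries Φ R} : LexPos (-x) ↔ x.leadingCoeff < 0 := by
  rw [lexPos_iff_leadingCoeff_pos, leadingCoeff_neg, neg_pos]

theorem HahnSeries.leadingCoeff_smul {Γ : Type*} [AddCommMonoid Γ] [LinearOrder Γ]
    [IsOrderedCancelAddMonoid Γ] [Semiring R] [NoZeroDivisors R] (c : R) (x : HahnSeries Γ R) :
    (c • x).leadingCoeff = c * x.leadingCoeff := by
  rw [← single_zero_mul_eq_smul, leadingCoeff_mul, leadingCoeff_of_single]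

theorem HahnSeries.SummableFamily.leadingCoeff_hsum_of_orderTop_lt [AddCommMonoid R] {α : Type*}
    {s : SummableFamily Φ R α} {a : α} {g : Φ} (ha : (s a).orderTop = g)
    (hlt : ∀ b, b ≠ a → (g : WithTop Φ) < (s b).orderTop) :
    s.hsum.leadingCoeff = (s a).leadingCoeff := by
  have hle : ∀ b, ∀ g' ∈ (s b).support, g ≤ g' := by
    intro b g' hg'
    have hord := orderTop_le_of_coeff_ne_zero ((mem_support _ _).1 hg')
    rcases eq_or_ne b a with rfl | hb
    · exact WithTop.coe_le_coe.1 (ha ▸ hord)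
    · exact WithTop.coe_le_coe.1 ((hlt b hb).le.trans hord)
  rw [hsum_leadingCoeff_of_le ha.symm hle fun b hb => coeff_eq_zero_of_lt_orderTop (hlt b hb),
    coeff_eq_leadingCoeff_of_orderTop_eq ha]

end LeadingCoeff

theorem RingHom.strictMono_of_real {k : Type*} [Ring k] [LinearOrder k] [IsStrictOrderedRing k]
    (ι : ℝ →+* k) : StrictMono ι :=
  (ringHom_monotone (fun _ => Real.isSquare_iff.mpr) ι).strictMono_of_injective ι.injective

namespace HahnEmbeddingData

variable {Φ : Type*} [LinearOrder Φ] {Γ : Type*} [AddCommGroup Γ] [LinearOrder Γ]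
  [IsOrderedAddMonoid Γ] (H : HahnEmbeddingData Φ Γ)

theorem b_pos (φ : Φ) : 0 < H.b φ := by
  rw [H.ord, H.hb, lexPos_iff_leadingCoeff_pos, leadingCoeff_of_single]
  exact one_pos

theorem nsmul_b_lt_b {φ ψ : Φ} (h : φ < ψ) (n : ℕ) : n • H.b ψ < H.b φ := by
  rw [← sub_pos, H.ord, map_sub, map_nsmul, H.hb, H.hb, lexPos_iff_leadingCoeff_pos,
    leadingCoeff_sub, leadingCoeff_of_single]
  · exact one_pos
  · rw [orderTop_single one_ne_zero]
    exact (lt_orderTop_single h).trans_le (orderTop_le_orderTop_smul _ _)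

theorem b_strictAnti : StrictAnti H.b := fun _ _ h => by
  simpa using H.nsmul_b_lt_b h 1

theorem not_archEquiv_b {φ ψ : Φ} (h : φ < ψ) : ¬ ArchEquiv (H.b φ) (H.b ψ) := by
  rintro ⟨n, hle, -⟩
  rw [abs_of_pos (H.b_pos φ), abs_of_pos (H.b_pos ψ)] at hle
  exact hle.not_gt (H.nsmul_b_lt_b h n)

end HahnEmbeddingData

section SeriesDerivation

variable {Φ : Type*} [LinearOrder Φ] {Γ : Type*} [AddCommGroup Γ] [LinearOrder Γ]
  [IsOrderedAddMonoid Γ] {k : Type*} [Field k] {H : HahnEmbeddingData Φ Γ} {ι : ℝ →+* k}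
  {D : HahnSeries Γ k → HahnSeries Γ k}

namespace IsSeriesDerivation

theorem map_zero (hD : IsSeriesDerivation H ι D) : D 0 = 0 := by
  simpa using hD.map_add 0 0

theorem map_one (hD : IsSeriesDerivation H ι D) : D 1 = 0 := by
  simpa using hD.leibniz 1 1

theorem map_single (hD : IsSeriesDerivation H ι D) (γ : Γ) (c : k) :
    D (single γ c) = c • D (single γ 1) := by
  obtain ⟨s, hs, hsum⟩ := hD.strong_linear (single γ c)
  have hsγ : ∀ γ', γ' ≠ γ → s γ' = 0 := fun γ' h => by
    rw [hs, coeff_single_of_ne h, zero_smul]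
  ext g
  rw [hsum, SummableFamily.coeff_hsum,
    finsum_eq_single _ γ fun γ' h => by rw [hsγ γ' h, coeff_zero], hs, coeff_single_same]

theorem map_single_zero (hD : IsSeriesDerivation H ι D) (c : k) : D (single 0 c) = 0 := by
  rw [hD.map_single, single_zero_one, hD.map_one, smul_zero]

theorem neg_logDer_eq (hD : IsSeriesDerivation H ι D) (φ : Φ) :
    -logDer H D φ = single (H.b φ) 1 * D (single (-H.b φ) 1) := by
  have hinv : single (H.b φ) (1 : k) * single (-H.b φ) 1 = 1 := by
    rw [single_mul_single, add_neg_cancel, one_mul, single_zero_one]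
  have hleib := hD.leibniz (single (H.b φ) 1) (single (-H.b φ) 1)
  rw [hinv, hD.map_one] at hleib
  rw [logDer, tmon, inv_eq_of_mul_eq_one_right hinv]
  exact neg_eq_of_add_eq_zero_right hleib.symm

end IsSeriesDerivation

end SeriesDerivation

theorem HDtwo.orderTop_map_lt {Γ : Type*} [AddCommGroup Γ] [LinearOrder Γ] {k : Type*} [Field k]
    {D : HahnSeries Γ k → HahnSeries Γ k} (hD : HDtwo D) {a b : HahnSeries Γ k} (ha : a ≠ 0)
    (hb : b ≠ 0) (ha0 : a.order ≠ 0) (hb0 : b.order ≠ 0) (h : a.orderTop < b.orderTop) :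
    (D a).orderTop < (D b).orderTop :=
  lt_of_le_not_ge ((hD a b ha hb ha0 hb0).1 h.le) fun h' => h.not_ge ((hD b a hb ha hb0 ha0).2 h')

section Hardy

variable {Φ : Type*} [LinearOrder Φ] {Γ : Type*} [AddCommGroup Γ] [LinearOrder Γ]
  [IsOrderedAddMonoid Γ] {k : Type*} [Field k] {D : HahnSeries Γ k → HahnSeries Γ k}

theorem HDthree.strictMono_orderTop_logDer (hD : HDthree D) (H : HahnEmbeddingData Φ Γ) :
    StrictMono fun φ => (logDer H D φ).orderTop := by
  intro φ ψ h
  have hne : ∀ φ, tmon H k φ ≠ 0 := fun _ => single_ne_zero one_ne_zero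
  have hord : ∀ φ, |(tmon H k φ).order| = H.b φ := fun φ => by
    rw [tmon, order_single one_ne_zero, abs_of_pos (H.b_pos φ)]
  obtain ⟨hle, hiff⟩ := hD (tmon H k φ) (tmon H k ψ) (hne φ) (hne ψ)
    (by rw [hord, hord]; exact H.b_strictAnti h) (by rw [hord]; exact H.b_pos ψ)
  refine hle.lt_of_ne fun heq => H.not_archEquiv_b h ?_
  simpa only [tmon, order_single one_ne_zero] using hiff.1 heq

end Hardy

section HField

variable {Φ : Type*} [LinearOrder Φ] {Γ : Type*} [AddCommGroup Γ] [LinearOrder Γ]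
  [IsOrderedAddMonoid Γ] {k : Type*} [Field k] [LinearOrder k] [IsStrictOrderedRing k]
  {H : HahnEmbeddingData Φ Γ} {ι : ℝ →+* k} {D : HahnSeries Γ k → HahnSeries Γ k}

theorem IsSeriesDerivation.lexPos_neg_logDer (hD : IsSeriesDerivation H ι D)
    (hHF : ∀ f : HahnSeries Γ k, LexPos f → f.orderTop < (0 : WithTop Γ) → LexPos (D f))
    (φ : Φ) : LexPos (-logDer H D φ) := by
  have hpos : LexPos (D (single (-H.b φ) (1 : k))) := by
    refine hHF _ (lexPos_iff_leadingCoeff_pos.2 (by simp)) ?_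
    rw [orderTop_single one_ne_zero]
    exact WithTop.coe_lt_coe.2 (neg_neg_of_pos (H.b_pos φ))
  rw [hD.neg_logDer_eq, lexPos_iff_leadingCoeff_pos, leadingCoeff_mul, leadingCoeff_of_single,
    one_mul]
  exact lexPos_iff_leadingCoeff_pos.1 hpos

theorem IsSeriesDerivation.lexPos_map_single_of_neg (hD : IsSeriesDerivation H ι D)
    (hD3 : HDthree D) (hlog : ∀ φ, LexPos (-logDer H D φ)) {γ : Γ} (hγ : γ < 0) :
    LexPos (D (single γ 1)) := by
  obtain ⟨s, hs, hsum⟩ := hD.strong_leibniz γ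
  have hs' : ∀ φ, s φ = single γ (ι ((H.e γ).coeff φ)) * logDer H D φ := fun φ => by
    rw [hs, ← single_zero_mul_eq_smul, ← mul_assoc, single_mul_single, zero_add, mul_one]
  obtain ⟨φ₀, hφ₀⟩ := WithTop.ne_top_iff_exists.1
    (orderTop_ne_top.2 ((map_ne_zero_iff H.e H.inj).2 hγ.ne))
  have hα₀ : ι ((H.e γ).coeff φ₀) < 0 := by
    have hneg : (H.e γ).leadingCoeff < 0 := by
      rw [← lexPos_neg_iff_leadingCoeff_neg, ← map_neg, ← H.ord]
      exact neg_pos.2 hγ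
    rw [← _root_.map_zero ι, coeff_eq_leadingCoeff_of_orderTop_eq hφ₀.symm]
    exact ι.strictMono_of_real hneg
  obtain ⟨u₀, hu₀⟩ := WithTop.ne_top_iff_exists.1
    (orderTop_ne_top.2 (neg_ne_zero.1 (hlog φ₀).ne_zero))
  have hsφ₀ : (s φ₀).orderTop = (γ + u₀ : Γ) := by
    rw [hs', orderTop_mul, orderTop_single hα₀.ne, ← hu₀, WithTop.coe_add]
  have hlt : ∀ φ, φ ≠ φ₀ → ((γ + u₀ : Γ) : WithTop Γ) < (s φ).orderTop := by
    intro φ hφ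
    rw [hs', orderTop_mul]
    by_cases hα : (H.e γ).coeff φ = 0
    · simp [hα]
    have hφ₀φ : φ₀ < φ :=
      (WithTop.coe_le_coe.1 (hφ₀ ▸ orderTop_le_of_coeff_ne_zero hα)).lt_of_ne hφ.symm
    rw [orderTop_single ((map_ne_zero ι).2 hα), WithTop.coe_add, hu₀]
    exact WithTop.add_lt_add_left WithTop.coe_ne_top (hD3.strictMono_orderTop_logDer H hφ₀φ)
  rw [lexPos_iff_leadingCoeff_pos, hsum,
    SummableFamily.leadingCoeff_hsum_of_orderTop_lt hsφ₀ hlt, hs', leadingCoeff_mul,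
    leadingCoeff_of_single]
  exact mul_pos_of_neg_of_neg hα₀ (lexPos_neg_iff_leadingCoeff_neg.1 (hlog φ₀))

theorem IsHardySeriesDerivation.lexPos_map (hD : IsHardySeriesDerivation H ι D)
    (hlog : ∀ φ, LexPos (-logDer H D φ)) {f : HahnSeries Γ k} (hf : LexPos f)
    (hneg : f.orderTop < (0 : WithTop Γ)) : LexPos (D f) := by
  obtain ⟨hSD, -, hD2, hD3⟩ := hD
  obtain ⟨γ, hγ⟩ := WithTop.ne_top_iff_exists.1 (orderTop_ne_top.2 hf.ne_zero)
  have hγ0 : γ < 0 := WithTop.coe_lt_coe.1 (hγ ▸ hneg)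
  set c := f.leadingCoeff
  have hc : 0 < c := lexPos_iff_leadingCoeff_pos.1 hf
  set r := f - single γ c
  have hr : (γ : WithTop Γ) < r.orderTop :=
    le_orderTop_of_leadingCoeff_eq hγ.symm (orderTop_single hc.ne') leadingCoeff_of_single.symm
  -- (HD2) needs `r'.order ≠ 0`; the constant term dropped from `r` lies in `ker d`
  set r' := r - single 0 (r.coeff 0)
  have hr' : (γ : WithTop Γ) < r'.orderTop :=
    (lt_min hr (lt_orderTop_single hγ0)).trans_le min_orderTop_le_orderTop_sub
  have hDf : D f = D (single γ c) + D r' := by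
    rw [show f = single γ c + single 0 (r.coeff 0) + r' by simp [r, r'], hSD.map_add,
      hSD.map_add, hSD.map_single_zero, add_zero]
  have hlead : LexPos (D (single γ c)) := by
    rw [hSD.map_single, lexPos_iff_leadingCoeff_pos, leadingCoeff_smul]
    exact mul_pos hc (lexPos_iff_leadingCoeff_pos.1 (hSD.lexPos_map_single_of_neg hD3 hlog hγ0))
  have hlt : (D (single γ c)).orderTop < (D r').orderTop := by
    rcases eq_or_ne r' 0 with hr'0 | hr'0
    · rw [hr'0, hSD.map_zero, orderTop_zero, WithTop.lt_top_iff_ne_top, orderTop_ne_top]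
      exact hlead.ne_zero
    refine hD2.orderTop_map_lt (single_ne_zero hc.ne') hr'0 ?_ ?_ ?_
    · rw [order_single hc.ne']
      exact hγ0.ne
    · exact fun h => coeff_order_eq_zero.not.2 hr'0 (by simp [h, r'])
    · rwa [orderTop_single hc.ne']
  rw [hDf, lexPos_iff_leadingCoeff_pos, leadingCoeff_add_eq_left hlt]
  exact lexPos_iff_leadingCoeff_pos.1 hlead

end HField

/-- let `k` be an ordered field, order `k((Γ))` lexicographically, and let `d`
be a series derivation of Hardy type on `k((Γ))`.  Then `k((Γ))` is an H-field (axioms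
(HF1): `O_v = ker d + m_v`, and (HF2): `f > 0` and `v(f) < 0` imply `d(f) > 0`) if and only
if for every `φ ∈ Φ` the leading coefficient of `d(t_φ)/t_φ` is negative, i.e.
`d(t_φ)/t_φ < 0`. -/
theorem hfield_iff_logder_neg {Φ : Type*} [LinearOrder Φ]
    {Γ : Type*} [AddCommGroup Γ] [LinearOrder Γ] [IsOrderedAddMonoid Γ] {k : Type*} [Field k] [LinearOrder k] [IsStrictOrderedRing k]
    (H : HahnEmbeddingData Φ Γ) (ι : ℝ →+* k)
    (D : HahnSeries Γ k → HahnSeries Γ k) (hD : IsHardySeriesDerivation H ι D) :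
    (HDone D ∧
      ∀ f : HahnSeries Γ k, LexPos f → f.orderTop < (0 : WithTop Γ) → LexPos (D f)) ↔
    (∀ φ : Φ, LexPos (-(logDer H D φ))) :=
  ⟨fun ⟨_, hHF⟩ => hD.1.lexPos_neg_logDer hHF,
    fun hlog => ⟨hD.2.1, fun _ hf hneg => hD.lexPos_map hlog hf hneg⟩⟩
end
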